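/- Fix an integer n ≥ 2 and let M = 1/ρ_min(n). Then M ≤ u_Opt(n,0) ≤ n²·⌈log₂ n⌉·M; that is, the minimum size of a dyadic hitter in X_n is at least M and at most n²⌈log₂ n⌉·M. -/

import Mathlib

namespace TQ

/-- A decision tree: internal nodes are labeled by questions (subsets of `α`,
with the two children corresponding to Yes/No), leaves by elements of `α`. -/
inductive DTree (α : Type) where
  | leaf (x : α) : DTree α
  | node (q : Finset α) (yes no : DTree α) : DTree α

namespace DTree

variable {α : Type} [DecidableEq α]

/-- The list of leaf labels of a decision tree. -/
def leaves : DTree α → List α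
  | .leaf x => [x]
  | .node _ t f => leaves t ++ leaves f

/-- The set of questions appearing at internal nodes. -/
def questions : DTree α → Set (Finset α)
  | .leaf _ => ∅
  | .node q t f => insert q (questions t ∪ questions f)

/-- Follow the path of `x` (Yes-edge iff `x` belongs to the question);
returns `some d` iff the path ends at a leaf labeled `x`, at depth `d`. -/
def find? : DTree α → α → Option ℕ
  | .leaf y, x => if y = x then some 0 else none
  | .node q t f, x => (if x ∈ q then find? t x else find? f x).map (· + 1)

/-- The depth of the leaf labeled `x` (junk value `0` if the path of `x`
does not end at a leaf labeled `x`). -/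
def depth (T : DTree α) (x : α) : ℕ := (T.find? x).getD 0

end DTree

variable {α : Type} [Fintype α] [DecidableEq α]

/-- `μ` is a probability distribution on `α`. -/
def IsDistribution (μ : α → ℝ) : Prop := (∀ x, 0 ≤ μ x) ∧ ∑ x, μ x = 1

/-- `T` is valid for `μ`: its leaves are distinct, the set of leaf labels is the
support of `μ`, and for every `x` in the support the path of `x` ends at the
leaf labeled `x`. -/
structure IsValid (T : DTree α) (μ : α → ℝ) : Prop where
  nodup : T.leaves.Nodup
  mem_leaves : ∀ x, x ∈ T.leaves ↔ μ x ≠ 0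
  finds : ∀ x, μ x ≠ 0 → T.find? x = some (T.depth x)

/-- The cost of `T` on `μ`: the average depth `∑ x, μ(x) · T(x)`. -/
noncomputable def cost (T : DTree α) (μ : α → ℝ) : ℝ := ∑ x, μ x * (T.depth x : ℝ)

/-- All questions of `T` belong to `Q`. -/
def UsesQuestions (T : DTree α) (Q : Set (Finset α)) : Prop := T.questions ⊆ Q

/-- `Opt(μ)`: the optimal cost over all decision trees valid for `μ`. -/
noncomputable def OptCost (μ : α → ℝ) : ℝ :=
  sInf { c | ∃ T : DTree α, IsValid T μ ∧ c = cost T μ }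

/-- `c_Q(μ)`: the optimal cost over decision trees valid for `μ`
using only questions from `Q`. -/
noncomputable def cQ (Q : Set (Finset α)) (μ : α → ℝ) : ℝ :=
  sInf { c | ∃ T : DTree α, IsValid T μ ∧ UsesQuestions T Q ∧ c = cost T μ }

/-- The base-2 (Shannon) entropy of `μ`. (Note `Real.logb 2 0 = 0`.) -/
noncomputable def entropy (μ : α → ℝ) : ℝ := ∑ x, -(μ x * Real.logb 2 (μ x))

/-- `Q` achieves prolixity `r`: for every distribution there is a valid tree using
only questions from `Q` of cost at most `Opt(μ) + r`. -/
def AchievesProlixity {n : ℕ} (Q : Finset (Finset (Fin n))) (r : ℝ) : Prop :=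
  ∀ μ : Fin n → ℝ, IsDistribution μ →
    ∃ T : DTree (Fin n), IsValid T μ ∧ UsesQuestions T ↑Q ∧ cost T μ ≤ OptCost μ + r

/-- `Q` achieves redundancy `r`: for every distribution there is a valid tree using
only questions from `Q` of cost at most `H(μ) + r`. -/
def AchievesRedundancy {n : ℕ} (Q : Finset (Finset (Fin n))) (r : ℝ) : Prop :=
  ∀ μ : Fin n → ℝ, IsDistribution μ →
    ∃ T : DTree (Fin n), IsValid T μ ∧ UsesQuestions T ↑Q ∧ cost T μ ≤ entropy μ + r

/-- `u_Opt(n,r)`: the minimum cardinality of a set of questions achieving prolixity `r`. -/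
noncomputable def uOpt (n : ℕ) (r : ℝ) : ℕ :=
  sInf { k | ∃ Q : Finset (Finset (Fin n)), Q.card = k ∧ AchievesProlixity Q r }

/-- `u_H(n,r)`: the minimum cardinality of a set of questions achieving redundancy `r`. -/
noncomputable def uH (n : ℕ) (r : ℝ) : ℕ :=
  sInf { k | ∃ Q : Finset (Finset (Fin n)), Q.card = k ∧ AchievesRedundancy Q r }

end TQ

namespace TQ

/-- `μ` is dyadic: every probability is `0` or an integer power of `1/2`. -/
def IsDyadic {α : Type} (μ : α → ℝ) : Prop :=
  ∀ x, μ x = 0 ∨ ∃ d : ℤ, μ x = (1 / 2 : ℝ) ^ d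

/-- `μ` is non-constant: its support has at least two elements. -/
def NonConstant {α : Type} (μ : α → ℝ) : Prop :=
  ∃ x y, x ≠ y ∧ μ x ≠ 0 ∧ μ y ≠ 0

end TQ

namespace TQ

open scoped Classical in
/-- The splitters of `μ`: the subsets of probability exactly `1/2` (the dyadic set `D(μ)`). -/
noncomputable def splitters (n : ℕ) (μ : Fin n → ℝ) : Finset (Finset (Fin n)) :=
  Finset.univ.filter (fun A => ∑ x ∈ A, μ x = 1 / 2)

/-- `ρ_i(D) = |{S ∈ D : |S| = i}| / C(n,i)`. -/
noncomputable def relDensity (n : ℕ) (D : Finset (Finset (Fin n))) (i : ℕ) : ℝ :=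
  ((D.filter (fun S => S.card = i)).card : ℝ) / (n.choose i : ℝ)

/-- `ρ(D) = max_{1 ≤ i ≤ n-1} ρ_i(D)`, the maximum relative density. -/
noncomputable def maxRelDensity (n : ℕ) (D : Finset (Finset (Fin n))) : ℝ :=
  ⨆ i ∈ Finset.Ico 1 n, relDensity n D i

/-- `ρ_min(n)`: the minimum of `ρ(D(μ))` over non-constant dyadic distributions `μ`. -/
noncomputable def rhoMin (n : ℕ) : ℝ :=
  sInf { ρ | ∃ μ : Fin n → ℝ, IsDistribution μ ∧ IsDyadic μ ∧ NonConstant μ ∧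
    ρ = maxRelDensity n (splitters n μ) }

end TQ

/-!
A question set `Q` achieves prolixity `0` exactly when it is a dyadic hitter. If `Q` halves every
non-constant dyadic distribution, an optimal depth profile `d` of any `μ` (a Kraft profile on the
support) can be realized top-down with questions from `Q`, because `2^{-d}` is itself dyadic.
Conversely, for dyadic `μ` the equality case of Gibbs' inequality forces an optimal tree to have
depths `-log₂ μ`, so its root question has probability `1/2`.

Lower bound: all `n!` relabellings of a distribution attaining `ρ_min(n)` must be hit, while a
fixed question of size `i` splits only a `ρ_i ≤ ρ_min(n)` fraction of them. Upper bound: there are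
at most `n^n` non-constant dyadic distributions, and among any family of them some question splits
a `ρ_min(n)/n` fraction (pigeonhole on the densest size, then averaging over subsets of that size),
so `⌊n² ⌈log₂ n⌉ / ρ_min(n)⌋` greedy choices hit them all.
-/

namespace TQ

open Finset

section Kraft

variable {α : Type}

def IsKraft (S : Finset α) (d : α → ℕ) : Prop := ∑ x ∈ S, (1 / 2 : ℝ) ^ d x = 1

theorem half_pow_sub_one {m : ℕ} (hm : 1 ≤ m) : (1 / 2 : ℝ) ^ (m - 1) = 2 * (1 / 2) ^ m := by
  obtain ⟨k, rfl⟩ := Nat.exists_eq_add_of_le hm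
  rw [Nat.add_sub_cancel_left, pow_add]
  ring

namespace IsKraft

variable {S : Finset α} {d : α → ℕ}

theorem nonempty (hk : IsKraft S d) : S.Nonempty := by
  rw [nonempty_iff_ne_empty]
  rintro rfl
  simp [IsKraft] at hk

theorem eq_zero_of_eq_singleton {x : α} (hk : IsKraft S d) (hS : S = {x}) : d x = 0 := by
  subst hS
  rw [IsKraft, sum_singleton, ← pow_zero (1 / 2 : ℝ)] at hk
  exact pow_right_injective₀ (by norm_num) (by norm_num) hk

theorem sum_two_pow_sub {m : ℕ} (hk : IsKraft S d) (hm : ∀ z ∈ S, d z ≤ m) :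
    ∑ z ∈ S, 2 ^ (m - d z) = 2 ^ m := by
  have hterm : ∀ z ∈ S, ((2 ^ (m - d z) : ℕ) : ℝ) = 2 ^ m * (1 / 2) ^ d z := by
    intro z hz
    rw [Nat.cast_pow, Nat.cast_ofNat, one_div, inv_pow, eq_mul_inv_iff_mul_eq₀ (by positivity),
      ← pow_add, Nat.sub_add_cancel (hm z hz)]
  have : ((∑ z ∈ S, 2 ^ (m - d z) : ℕ) : ℝ) = ((2 ^ m : ℕ) : ℝ) := by
    rw [Nat.cast_sum, sum_congr rfl hterm, ← mul_sum, hk, mul_one, Nat.cast_pow, Nat.cast_ofNat]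
  exact_mod_cast this

theorem sub_one_iff (hd : ∀ x ∈ S, 1 ≤ d x) :
    IsKraft S (d · - 1) ↔ ∑ x ∈ S, (1 / 2 : ℝ) ^ d x = 1 / 2 := by
  unfold IsKraft
  rw [sum_congr rfl fun x hx => half_pow_sub_one (hd x hx), ← mul_sum]
  constructor <;> intro h <;> linarith

end IsKraft

variable [DecidableEq α]

namespace IsKraft

variable {S : Finset α} {d : α → ℕ}

theorem one_le (hk : IsKraft S d) (hS : 2 ≤ #S) {x : α} (hx : x ∈ S) : 1 ≤ d x := by
  obtain ⟨y, hy, hyx⟩ := exists_mem_ne (by omega : 1 < #S) x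
  by_contra! h
  have hxy := sum_le_sum_of_subset_of_nonneg (f := fun z => (1 / 2 : ℝ) ^ d z)
    (show {x, y} ⊆ S by simp [insert_subset_iff, hx, hy]) fun _ _ _ => by positivity
  rw [sum_pair hyx.symm, Nat.lt_one_iff.mp h, pow_zero] at hxy
  unfold IsKraft at hk
  linarith [show (0 : ℝ) < (1 / 2) ^ d y by positivity]

/-- Parity: `∑ z ∈ S, 2 ^ (m - d z) = 2 ^ m` with `m` the maximal depth. -/
theorem exists_pair_max (hk : IsKraft S d) (hS : 2 ≤ #S) :
    ∃ x ∈ S, ∃ y ∈ S, x ≠ y ∧ d y = d x ∧ ∀ z ∈ S, d z ≤ d x := by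
  obtain ⟨x₀, hx₀, hmax⟩ := exists_max_image S d (card_pos.mp (by omega))
  set m := d x₀
  have hm : 1 ≤ m := hk.one_le hS hx₀
  have hsplit := sum_filter_add_sum_filter_not S (fun z => d z = m) (fun z => 2 ^ (m - d z))
  rw [hk.sum_two_pow_sub hmax, sum_congr rfl (fun z hz => by rw [(mem_filter.mp hz).2,
    Nat.sub_self, pow_zero]), sum_const, smul_eq_mul, mul_one] at hsplit
  have hrest : 2 ∣ ∑ z ∈ S with ¬d z = m, 2 ^ (m - d z) := dvd_sum fun z hz => by
    have hle := hmax z (mem_filter.mp hz).1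
    have hne := (mem_filter.mp hz).2
    exact dvd_pow_self 2 (by omega)
  have htop : 2 ∣ 2 ^ m := dvd_pow_self 2 (by omega)
  have hx₀C : x₀ ∈ S.filter (fun z => d z = m) := mem_filter.mpr ⟨hx₀, rfl⟩
  have hC : 1 < #(S.filter fun z => d z = m) := by
    have := card_pos.mpr ⟨x₀, hx₀C⟩
    omega
  obtain ⟨x, hx, y, hy, hxy⟩ := one_lt_card.mp hC
  rw [mem_filter] at hx hy
  exact ⟨x, hx.1, y, hy.1, hxy, hy.2.trans hx.2.symm, hx.2 ▸ hmax⟩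

theorem merge (hk : IsKraft S d) {x y : α} (hx : x ∈ S) (hy : y ∈ S) (hxy : x ≠ y)
    (hdxy : d y = d x) (hd : 1 ≤ d x) :
    IsKraft (S.erase y) (Function.update d x (d x - 1)) := by
  have hx' : x ∈ S.erase y := mem_erase.mpr ⟨hxy, hx⟩
  unfold IsKraft
  rw [← add_sum_erase _ _ hx', Function.update_self, half_pow_sub_one hd,
    sum_congr rfl fun z hz => by rw [Function.update_of_ne (mem_erase.mp hz).1]]
  have e₁ := add_sum_erase (S.erase y) (fun z => (1 / 2 : ℝ) ^ d z) hx'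
  have e₂ := add_sum_erase S (fun z => (1 / 2 : ℝ) ^ d z) hy
  rw [hdxy] at e₂
  unfold IsKraft at hk
  linarith

theorem le_card_sub_one (hk : IsKraft S d) {z : α} (hz : z ∈ S) : d z ≤ #S - 1 := by
  induction S using Finset.strongInduction generalizing d z with
  | H S ih =>
  obtain hS | hS := Nat.lt_or_ge #S 2
  · obtain ⟨a, rfl⟩ := card_eq_one.mp (show #S = 1 by have := card_pos.mpr ⟨z, hz⟩; omega)
    rw [mem_singleton.mp hz, hk.eq_zero_of_eq_singleton rfl]
    exact Nat.zero_le _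
  obtain ⟨x, hx, y, hy, hxy, hdxy, hmax⟩ := hk.exists_pair_max hS
  have hx' : x ∈ S.erase y := mem_erase.mpr ⟨hxy, hx⟩
  have := ih _ (erase_ssubset hy) (hk.merge hx hy hxy hdxy (hk.one_le hS hx)) hx'
  rw [Function.update_self, card_erase_of_mem hy] at this
  have := hmax z hz
  omega

theorem exists_sum_eq_half (hk : IsKraft S d) (hS : 2 ≤ #S) :
    ∃ A ⊆ S, ∑ x ∈ A, (1 / 2 : ℝ) ^ d x = 1 / 2 := by
  induction S using Finset.strongInduction generalizing d with
  | H S ih =>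
  by_cases hone : ∃ x ∈ S, d x = 1
  · obtain ⟨x, hx, hdx⟩ := hone
    exact ⟨{x}, singleton_subset_iff.mpr hx, by simp [hdx]⟩
  push Not at hone
  obtain ⟨x, hx, y, hy, hxy, hdxy, -⟩ := hk.exists_pair_max hS
  have hd := hk.one_le hS hx
  have hk' := hk.merge hx hy hxy hdxy hd
  have hx' : x ∈ S.erase y := mem_erase.mpr ⟨hxy, hx⟩
  have hS' : 2 ≤ #(S.erase y) := by
    by_contra h
    have : S.erase y = {x} := eq_singleton_iff_unique_mem.mpr
      ⟨hx', fun z hz => card_le_one.mp (by omega) z hz x hx'⟩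
    have := hk'.eq_zero_of_eq_singleton this
    rw [Function.update_self] at this
    exact hone x hx (by omega)
  obtain ⟨A, hA, hsum⟩ := ih _ (erase_ssubset hy) hk' hS'
  have hyA : y ∉ A := fun h => (mem_erase.mp (hA h)).1 rfl
  by_cases hxA : x ∈ A
  · refine ⟨insert y A, insert_subset hy ((hA.trans (erase_subset y S))), ?_⟩
    have e₁ := add_sum_erase A (fun z => (1 / 2 : ℝ) ^ d z) hxA
    have e₂ := add_sum_erase A (fun z => (1 / 2 : ℝ) ^ Function.update d x (d x - 1) z) hxA
    rw [sum_congr rfl fun z hz => by rw [Function.update_of_ne (mem_erase.mp hz).1],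
      Function.update_self, half_pow_sub_one hd] at e₂
    rw [sum_insert hyA, hdxy]
    linarith
  · refine ⟨A, hA.trans (erase_subset y S), (sum_congr rfl fun z hz => ?_).trans hsum⟩
    rw [Function.update_of_ne (ne_of_mem_of_not_mem hz hxA)]

end IsKraft

theorem exists_isKraft {S : Finset α} (hS : S.Nonempty) : ∃ d : α → ℕ, IsKraft S d := by
  induction S using Finset.strongInduction with
  | H S ih =>
  obtain ⟨x, hx⟩ := hS
  obtain hS' | hS' := (S.erase x).eq_empty_or_nonempty
  · refine ⟨fun _ => 0, ?_⟩
    rw [← insert_erase hx, hS']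
    simp [IsKraft]
  obtain ⟨d, hd⟩ := ih _ (erase_ssubset hx) hS'
  refine ⟨Function.update (d · + 1) x 1, ?_⟩
  unfold IsKraft at hd ⊢
  rw [← add_sum_erase _ _ hx, Function.update_self,
    sum_congr rfl fun z hz => by rw [Function.update_of_ne (mem_erase.mp hz).1, pow_succ],
    ← sum_mul, hd]
  norm_num

end Kraft

section Trees

variable {α : Type} [DecidableEq α]

def HalvesKraft (Q : Set (Finset α)) : Prop :=
  ∀ (S : Finset α) (d : α → ℕ), IsKraft S d → 2 ≤ #S →
    ∃ A ∈ Q, ∑ x ∈ S ∩ A, (1 / 2 : ℝ) ^ d x = 1 / 2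

theorem halvesKraft_univ : HalvesKraft (Set.univ : Set (Finset α)) := fun _ _ hk hS =>
  let ⟨A, hA, hsum⟩ := hk.exists_sum_eq_half hS
  ⟨A, Set.mem_univ A, by rwa [inter_eq_right.mpr hA]⟩

namespace DTree

theorem find?_node_eq_some {q : Finset α} {t f : DTree α} {x : α} {k : ℕ} :
    (node q t f).find? x = some k ↔
      1 ≤ k ∧ (if x ∈ q then t.find? x else f.find? x) = some (k - 1) := by
  rw [find?, Option.map_eq_some_iff]
  constructor
  · rintro ⟨j, hj, rfl⟩
    exact ⟨by omega, by simpa using hj⟩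
  · rintro ⟨hk, hj⟩
    exact ⟨k - 1, hj, by omega⟩

theorem mem_leaves_of_find?_eq_some {T : DTree α} {x : α} {k : ℕ} (h : T.find? x = some k) :
    x ∈ T.leaves := by
  induction T generalizing k with
  | leaf y =>
    rw [find?] at h
    split_ifs at h with hy
    simp [leaves, hy]
  | node q t f iht ihf =>
    obtain ⟨-, h⟩ := find?_node_eq_some.mp h
    rw [leaves, List.mem_append]
    split_ifs at h
    exacts [Or.inl (iht h), Or.inr (ihf h)]

structure HasProfile (T : DTree α) (S : Finset α) (d : α → ℕ) : Prop where
  nodup : T.leaves.Nodup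
  toFinset_leaves : T.leaves.toFinset = S
  find?_eq : ∀ x ∈ S, T.find? x = some (d x)

namespace HasProfile

variable {T t f : DTree α} {q S : Finset α} {d : α → ℕ}

theorem leaf {a : α} (h : d a = 0) : (leaf a).HasProfile {a} d :=
  ⟨List.nodup_singleton a, by simp [leaves], by simp [find?, h]⟩

theorem eq_singleton_of_leaf {a : α} (h : (DTree.leaf a).HasProfile S d) : S = {a} := by
  simpa [leaves] using h.toFinset_leaves.symm

theorem congr {d' : α → ℕ} (h : T.HasProfile S d) (hdd' : ∀ x ∈ S, d x = d' x) :
    T.HasProfile S d' :=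
  ⟨h.nodup, h.toFinset_leaves, fun x hx => hdd' x hx ▸ h.find?_eq x hx⟩

theorem node (hd : ∀ x ∈ S, 1 ≤ d x) (ht : t.HasProfile (S ∩ q) (d · - 1))
    (hf : f.HasProfile (S \ q) (d · - 1)) : (DTree.node q t f).HasProfile S d := by
  have mem_t {x} (hx : x ∈ t.leaves) : x ∈ S ∩ q := by
    rw [← ht.toFinset_leaves]; exact List.mem_toFinset.mpr hx
  have mem_f {x} (hx : x ∈ f.leaves) : x ∈ S \ q := by
    rw [← hf.toFinset_leaves]; exact List.mem_toFinset.mpr hx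
  refine ⟨?_, ?_, fun x hx => find?_node_eq_some.mpr ⟨hd x hx, ?_⟩⟩
  · refine List.nodup_append.mpr ⟨ht.nodup, hf.nodup, fun a ha b hb hab => ?_⟩
    exact (mem_sdiff.mp (mem_f hb)).2 (hab ▸ (mem_inter.mp (mem_t ha)).2)
  · rw [leaves, List.toFinset_append, ht.toFinset_leaves, hf.toFinset_leaves, union_comm,
      sdiff_union_inter]
  · split_ifs with hq
    exacts [ht.find?_eq x (mem_inter.mpr ⟨hx, hq⟩), hf.find?_eq x (mem_sdiff.mpr ⟨hx, hq⟩)]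

theorem of_node (h : (DTree.node q t f).HasProfile S d) :
    (∀ x ∈ S, 1 ≤ d x) ∧ t.HasProfile (S ∩ q) (d · - 1) ∧ f.HasProfile (S \ q) (d · - 1) := by
  have hstep (x) (hx : x ∈ S) := find?_node_eq_some.mp (h.find?_eq x hx)
  obtain ⟨hnt, hnf, hdisj⟩ := List.nodup_append.mp h.nodup
  have mem_S {x} (hx : x ∈ t.leaves ∨ x ∈ f.leaves) : x ∈ S := by
    rw [← h.toFinset_leaves, List.mem_toFinset, leaves, List.mem_append]; exact hx
  have mem_t {x} : x ∈ t.leaves ↔ x ∈ S ∩ q := by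
    refine ⟨fun hx => mem_inter.mpr ⟨mem_S (Or.inl hx), by_contra fun hq => ?_⟩, fun hx => ?_⟩
    · have := (hstep x (mem_S (Or.inl hx))).2
      rw [if_neg hq] at this
      exact hdisj x hx x (mem_leaves_of_find?_eq_some this) rfl
    · obtain ⟨hxS, hq⟩ := mem_inter.mp hx
      have := (hstep x hxS).2
      rw [if_pos hq] at this
      exact mem_leaves_of_find?_eq_some this
  have mem_f {x} : x ∈ f.leaves ↔ x ∈ S \ q := by
    refine ⟨fun hx => mem_sdiff.mpr ⟨mem_S (Or.inr hx), fun hq => ?_⟩, fun hx => ?_⟩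
    · have := (hstep x (mem_S (Or.inr hx))).2
      rw [if_pos hq] at this
      exact hdisj x (mem_leaves_of_find?_eq_some this) x hx rfl
    · obtain ⟨hxS, hq⟩ := mem_sdiff.mp hx
      have := (hstep x hxS).2
      rw [if_neg hq] at this
      exact mem_leaves_of_find?_eq_some this
  refine ⟨fun x hx => (hstep x hx).1, ⟨hnt, by ext; simp [mem_t], fun x hx => ?_⟩,
    ⟨hnf, by ext; simp [mem_f], fun x hx => ?_⟩⟩
  · obtain ⟨hxS, hq⟩ := mem_inter.mp hx
    simpa [hq] using (hstep x hxS).2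
  · obtain ⟨hxS, hq⟩ := mem_sdiff.mp hx
    simpa [hq] using (hstep x hxS).2

theorem isKraft (h : T.HasProfile S d) : IsKraft S d := by
  induction T generalizing S d with
  | leaf a =>
    obtain rfl := h.eq_singleton_of_leaf
    have := h.find?_eq a (mem_singleton_self a)
    simp [IsKraft, find?] at this ⊢
    simp [← this]
  | node q t f iht ihf =>
    obtain ⟨hd, ht, hf⟩ := h.of_node
    have h₁ := (IsKraft.sub_one_iff fun x hx => hd x (mem_inter.mp hx).1).mp (iht ht)
    have h₂ := (IsKraft.sub_one_iff fun x hx => hd x (mem_sdiff.mp hx).1).mp (ihf hf)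
    rw [IsKraft, ← sum_inter_add_sum_sdiff S q, h₁, h₂]
    norm_num

theorem sum_inter_root (h : (DTree.node q t f).HasProfile S d) :
    ∑ x ∈ S ∩ q, (1 / 2 : ℝ) ^ d x = 1 / 2 := by
  obtain ⟨hd, ht, -⟩ := h.of_node
  exact (IsKraft.sub_one_iff fun x hx => hd x (mem_inter.mp hx).1).mp ht.isKraft

theorem depth_eq (h : T.HasProfile S d) {x : α} (hx : x ∈ S) : T.depth x = d x := by
  rw [depth, h.find?_eq x hx, Option.getD_some]

end HasProfile

theorem exists_hasProfile {Q : Set (Finset α)} (hQ : HalvesKraft Q)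
    {S : Finset α} {d : α → ℕ} (hk : IsKraft S d) :
    ∃ T : DTree α, T.questions ⊆ Q ∧ T.HasProfile S d := by
  induction S using Finset.strongInduction generalizing d with
  | H S ih =>
  obtain hS | hS := Nat.lt_or_ge #S 2
  · obtain ⟨a, rfl⟩ := card_eq_one.mp (show #S = 1 by have := card_pos.mpr hk.nonempty; omega)
    exact ⟨.leaf a, by simp [questions], .leaf (hk.eq_zero_of_eq_singleton rfl)⟩
  obtain ⟨A, hAQ, hA⟩ := hQ S d hk hS
  have hd : ∀ x ∈ S, 1 ≤ d x := fun x hx => hk.one_le hS hx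
  have hk₁ : IsKraft (S ∩ A) (d · - 1) :=
    (IsKraft.sub_one_iff fun x hx => hd x (mem_inter.mp hx).1).mpr hA
  have hk₂ : IsKraft (S \ A) (d · - 1) := by
    refine (IsKraft.sub_one_iff fun x hx => hd x (mem_sdiff.mp hx).1).mpr ?_
    have := sum_inter_add_sum_sdiff S A fun x => (1 / 2 : ℝ) ^ d x
    rw [hk, hA] at this
    linarith
  obtain ⟨a, ha⟩ := hk₁.nonempty
  obtain ⟨b, hb⟩ := hk₂.nonempty
  obtain ⟨T₁, hQ₁, hT₁⟩ := ih _ ((ssubset_iff_of_subset inter_subset_left).mpr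
    ⟨b, (mem_sdiff.mp hb).1, fun h => (mem_sdiff.mp hb).2 (mem_inter.mp h).2⟩) hk₁
  obtain ⟨T₂, hQ₂, hT₂⟩ := ih _ ((ssubset_iff_of_subset sdiff_subset).mpr
    ⟨a, (mem_inter.mp ha).1, fun h => (mem_sdiff.mp h).2 (mem_inter.mp ha).2⟩) hk₂
  exact ⟨.node A T₁ T₂, Set.insert_subset hAQ (Set.union_subset hQ₁ hQ₂), hT₁.node hd hT₂⟩

end DTree

end Trees

section Distribution

variable {α : Type} [Fintype α]

open scoped Classical in
noncomputable def supp (μ : α → ℝ) : Finset α := univ.filter (μ · ≠ 0)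

variable {μ : α → ℝ}

theorem mem_supp {x : α} : x ∈ supp μ ↔ μ x ≠ 0 := by
  simp [supp]

theorem sum_supp_inter [DecidableEq α] (A : Finset α) :
    ∑ x ∈ supp μ ∩ A, μ x = ∑ x ∈ A, μ x :=
  sum_subset inter_subset_right fun x hxA hx => by
    by_contra h
    exact hx (mem_inter.mpr ⟨mem_supp.mpr h, hxA⟩)

theorem IsDistribution.sum_supp (hμ : IsDistribution μ) : ∑ x ∈ supp μ, μ x = 1 := by
  classical
  simpa [hμ.2] using sum_supp_inter (μ := μ) univ

theorem IsDistribution.exists_isKraft (hμ : IsDistribution μ) (hdy : IsDyadic μ) :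
    ∃ e : α → ℕ, IsKraft (supp μ) e ∧ ∀ x ∈ supp μ, μ x = (1 / 2 : ℝ) ^ e x := by
  have hexp : ∀ x ∈ supp μ, ∃ k : ℕ, μ x = (1 / 2 : ℝ) ^ k := by
    intro x hx
    obtain h | ⟨k, hk⟩ := hdy x
    · exact absurd h (mem_supp.mp hx)
    have hle : μ x ≤ 1 := hμ.2 ▸ single_le_sum (fun y _ => hμ.1 y) (mem_univ x)
    rw [hk, zpow_le_one_iff_right_of_lt_one₀ (by norm_num) (by norm_num)] at hle
    exact ⟨k.toNat, by rw [hk, ← zpow_natCast, Int.toNat_of_nonneg hle]⟩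
  choose! e he using hexp
  exact ⟨e, (sum_congr rfl fun x hx => (he x hx).symm).trans hμ.sum_supp, he⟩

theorem IsDistribution.supp_nonempty (hμ : IsDistribution μ) : (supp μ).Nonempty :=
  nonempty_of_sum_ne_zero (hμ.sum_supp ▸ one_ne_zero)

theorem NonConstant.two_le_card_supp (h : NonConstant μ) : 2 ≤ #(supp μ) := by
  obtain ⟨x, y, hxy, hx, hy⟩ := h
  exact one_lt_card.mpr ⟨x, mem_supp.mpr hx, y, mem_supp.mpr hy, hxy⟩

variable [DecidableEq α] {T : DTree α}

theorem cost_eq_sum_supp (T : DTree α) (μ : α → ℝ) :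
    cost T μ = ∑ x ∈ supp μ, μ x * T.depth x := by
  refine (sum_subset (subset_univ _) fun x _ hx => ?_).symm
  rw [not_ne_iff.mp (mt mem_supp.mpr hx), zero_mul]

theorem optCost_le_cost (hμ : IsDistribution μ) (hT : IsValid T μ) :
    OptCost μ ≤ cost T μ :=
  csInf_le ⟨0, fun _ ⟨T', _, hc⟩ => hc ▸ sum_nonneg fun x _ => by
    have := hμ.1 x; positivity⟩ ⟨T, hT, rfl⟩

theorem IsValid.hasProfile (hT : IsValid T μ) : T.HasProfile (supp μ) T.depth :=
  ⟨hT.nodup, by ext x; rw [List.mem_toFinset, hT.mem_leaves, mem_supp],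
    fun x hx => hT.finds x (mem_supp.mp hx)⟩

theorem DTree.HasProfile.isValid {d : α → ℕ} (h : T.HasProfile (supp μ) d) : IsValid T μ :=
  ⟨h.nodup, fun x => by rw [← List.mem_toFinset, h.toFinset_leaves, mem_supp],
    fun x hx => by rw [h.find?_eq x (mem_supp.mpr hx), h.depth_eq (mem_supp.mpr hx)]⟩

theorem DTree.HasProfile.cost_eq {d : α → ℕ} (h : T.HasProfile (supp μ) d) :
    cost T μ = ∑ x ∈ supp μ, μ x * d x := by
  rw [cost_eq_sum_supp]
  exact sum_congr rfl fun x hx => by rw [h.depth_eq hx]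

theorem exists_isValid_of_isKraft {Q : Set (Finset α)} (hQ : HalvesKraft Q) {d : α → ℕ}
    (hk : IsKraft (supp μ) d) :
    ∃ T : DTree α, IsValid T μ ∧ UsesQuestions T Q ∧ cost T μ = ∑ x ∈ supp μ, μ x * d x := by
  obtain ⟨T, hQT, hT⟩ := DTree.exists_hasProfile hQ hk
  exact ⟨T, hT.isValid, hQT, hT.cost_eq⟩

theorem optCost_le_sum_of_isKraft (hμ : IsDistribution μ) {d : α → ℕ}
    (hk : IsKraft (supp μ) d) : OptCost μ ≤ ∑ x ∈ supp μ, μ x * d x := by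
  obtain ⟨T, hT, -, hc⟩ := exists_isValid_of_isKraft halvesKraft_univ hk
  exact hc ▸ optCost_le_cost hμ hT

theorem exists_isKraft_forall_sum_le {S : Finset α} (hS : S.Nonempty) (w : α → ℝ) :
    ∃ d : α → ℕ, IsKraft S d ∧
      ∀ d' : α → ℕ, IsKraft S d' → ∑ x ∈ S, w x * d x ≤ ∑ x ∈ S, w x * d' x := by
  set N := #S
  have hN : 0 < N := card_pos.mpr hS
  -- Kraft profiles are bounded by `#S - 1` on `S`, so finitely many costs occur.
  have bounded (d : α → ℕ) (hd : IsKraft S d) :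
      ∃ g : α → Fin N, IsKraft S (g · : α → ℕ) ∧ ∀ x ∈ S, (g x : ℕ) = d x := by
    have hg : ∀ x ∈ S, min (d x) (N - 1) = d x := fun x hx => min_eq_left (hd.le_card_sub_one hx)
    refine ⟨fun x => ⟨min (d x) (N - 1), by omega⟩, (sum_congr rfl fun x hx => ?_).trans hd, hg⟩
    simp only [hg x hx]
  obtain ⟨d₀, hd₀⟩ := exists_isKraft hS
  obtain ⟨g, hg, hmin⟩ := Set.exists_min_image {g : α → Fin N | IsKraft S (g · : α → ℕ)}
    (fun g => ∑ x ∈ S, w x * (g x : ℕ)) (Set.toFinite _)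
    (let ⟨g₀, hg₀, _⟩ := bounded d₀ hd₀; ⟨g₀, hg₀⟩)
  refine ⟨(g · : α → ℕ), hg, fun d hd => ?_⟩
  obtain ⟨g', hg', hg'd⟩ := bounded d hd
  exact (hmin g' hg').trans_eq (sum_congr rfl fun x hx => by rw [hg'd x hx])

end Distribution

section Gibbs

open Real

theorem half_pow_eq_exp (k : ℕ) : (1 / 2 : ℝ) ^ k = exp (-(k * log 2)) := by
  rw [exp_neg, exp_nat_mul, exp_log two_pos, one_div, inv_pow]

theorem half_pow_eq_mul_exp (a b : ℕ) :
    (1 / 2 : ℝ) ^ b = (1 / 2) ^ a * exp ((a - b : ℝ) * log 2) := by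
  rw [half_pow_eq_exp, half_pow_eq_exp, ← exp_add]
  ring_nf

/-- The tangent-line bound `exp y ≥ 1 + y`, with `y = (a - b) log 2`. -/
theorem half_pow_mul_le_sub (a b : ℕ) :
    (1 / 2 : ℝ) ^ a * ((a - b : ℝ) * log 2) ≤ (1 / 2) ^ b - (1 / 2) ^ a := by
  rw [half_pow_eq_mul_exp a b, ← mul_sub_one]
  gcongr
  linarith [add_one_le_exp ((a - b : ℝ) * log 2)]

theorem half_pow_mul_lt_sub {a b : ℕ} (hab : a ≠ b) :
    (1 / 2 : ℝ) ^ a * ((a - b : ℝ) * log 2) < (1 / 2) ^ b - (1 / 2) ^ a := by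
  rw [half_pow_eq_mul_exp a b, ← mul_sub_one]
  have hy : (a - b : ℝ) * log 2 ≠ 0 :=
    mul_ne_zero (sub_ne_zero.mpr (Nat.cast_injective.ne hab)) (log_pos one_lt_two).ne'
  gcongr
  linarith [add_one_lt_exp hy]

/-- Equality case of Gibbs' inequality. -/
theorem IsKraft.eq_of_sum_mul_le {α : Type} {S : Finset α} {d e : α → ℕ} (he : IsKraft S e)
    (hd : IsKraft S d)
    (h : ∑ x ∈ S, (1 / 2 : ℝ) ^ e x * d x ≤ ∑ x ∈ S, (1 / 2 : ℝ) ^ e x * e x) :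
    ∀ x ∈ S, d x = e x := by
  by_contra! hne
  obtain ⟨x, hx, hdx⟩ := hne
  have hlt := sum_lt_sum (fun y _ => half_pow_mul_le_sub (e y) (d y))
    ⟨x, hx, half_pow_mul_lt_sub hdx.symm⟩
  unfold IsKraft at hd he
  rw [sum_sub_distrib, hd, he, sub_self] at hlt
  have hrw : ∑ y ∈ S, (1 / 2 : ℝ) ^ e y * ((e y - d y : ℝ) * log 2) =
      (∑ y ∈ S, (1 / 2 : ℝ) ^ e y * e y - ∑ y ∈ S, (1 / 2 : ℝ) ^ e y * d y) * log 2 := by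
    rw [← sum_sub_distrib, sum_mul]
    exact sum_congr rfl fun y _ => by ring
  rw [hrw] at hlt
  nlinarith [log_pos one_lt_two]

end Gibbs

section KraftDist

variable {α : Type} [DecidableEq α] {S : Finset α} {d : α → ℕ}

noncomputable def kraftDist (S : Finset α) (d : α → ℕ) (x : α) : ℝ :=
  if x ∈ S then (1 / 2) ^ d x else 0

theorem sum_kraftDist (A : Finset α) :
    ∑ x ∈ A, kraftDist S d x = ∑ x ∈ S ∩ A, (1 / 2 : ℝ) ^ d x := by
  simp only [kraftDist, sum_ite_mem, inter_comm]

theorem IsKraft.isDistribution_kraftDist [Fintype α] (hk : IsKraft S d) :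
    IsDistribution (kraftDist S d) :=
  ⟨fun x => by unfold kraftDist; positivity, by rw [sum_kraftDist, inter_univ]; exact hk⟩

theorem isDyadic_kraftDist : IsDyadic (kraftDist S d) := fun x => by
  by_cases hx : x ∈ S
  · exact .inr ⟨d x, by simp [kraftDist, hx]⟩
  · exact .inl (if_neg hx)

theorem nonConstant_kraftDist (hS : 2 ≤ #S) : NonConstant (kraftDist S d) :=
  let ⟨x, hx, y, hy, hxy⟩ := one_lt_card.mp hS
  ⟨x, y, hxy, by simp [kraftDist, hx], by simp [kraftDist, hy]⟩

end KraftDist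

section Hitter

variable {n : ℕ}

theorem mem_splitters {μ : Fin n → ℝ} {A : Finset (Fin n)} :
    A ∈ splitters n μ ↔ ∑ x ∈ A, μ x = 1 / 2 := by
  simp [splitters]

def IsDyadicHitter (Q : Finset (Finset (Fin n))) : Prop :=
  ∀ μ : Fin n → ℝ, IsDistribution μ → IsDyadic μ → NonConstant μ → ∃ A ∈ Q, A ∈ splitters n μ

theorem IsDyadicHitter.halvesKraft {Q : Finset (Finset (Fin n))} (hQ : IsDyadicHitter Q) :
    HalvesKraft (Q : Set (Finset (Fin n))) := fun _ _ hk hS =>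
  let ⟨A, hA, hAν⟩ := hQ _ hk.isDistribution_kraftDist isDyadic_kraftDist (nonConstant_kraftDist hS)
  ⟨A, hA, sum_kraftDist A ▸ mem_splitters.mp hAν⟩

theorem IsDyadicHitter.achievesProlixity_zero {Q : Finset (Finset (Fin n))}
    (hQ : IsDyadicHitter Q) : AchievesProlixity Q 0 := by
  intro μ hμ
  obtain ⟨d, hk, hmin⟩ := exists_isKraft_forall_sum_le hμ.supp_nonempty μ
  obtain ⟨T, hT, hTQ, hc⟩ := exists_isValid_of_isKraft hQ.halvesKraft hk
  refine ⟨T, hT, hTQ, (add_zero (OptCost μ)).symm ▸ le_csInf ⟨_, T, hT, rfl⟩ ?_⟩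
  rintro _ ⟨T', hT', rfl⟩
  rw [hc, cost_eq_sum_supp]
  exact hmin _ hT'.hasProfile.isKraft

/-- For dyadic `μ` an optimal tree has depths `-log₂ μ`, so its root question splits `μ`. -/
theorem IsValid.exists_sum_eq_half {α : Type} [Fintype α] [DecidableEq α] {μ : α → ℝ}
    {T : DTree α} (hT : IsValid T μ) (hμ : IsDistribution μ) (hdy : IsDyadic μ)
    (hnc : NonConstant μ) (hc : cost T μ ≤ OptCost μ) :
    ∃ q ∈ T.questions, ∑ x ∈ q, μ x = 1 / 2 := by
  obtain ⟨e, he, hμe⟩ := hμ.exists_isKraft hdy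
  have hprof := hT.hasProfile
  have hdepth : ∀ x ∈ supp μ, T.depth x = e x := by
    refine he.eq_of_sum_mul_le hprof.isKraft ?_
    calc ∑ x ∈ supp μ, (1 / 2 : ℝ) ^ e x * T.depth x
        = cost T μ := by rw [cost_eq_sum_supp]; exact sum_congr rfl fun x hx => by rw [hμe x hx]
      _ ≤ ∑ x ∈ supp μ, μ x * e x := hc.trans (optCost_le_sum_of_isKraft hμ he)
      _ = ∑ x ∈ supp μ, (1 / 2 : ℝ) ^ e x * e x := sum_congr rfl fun x hx => by rw [hμe x hx]
  cases T with
  | leaf a =>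
    have := hnc.two_le_card_supp
    rw [hprof.eq_singleton_of_leaf, card_singleton] at this
    omega
  | node q t f =>
    refine ⟨q, Set.mem_insert q _, ?_⟩
    rw [← sum_supp_inter, ← (hprof.congr hdepth).sum_inter_root]
    exact sum_congr rfl fun x hx => hμe x (mem_inter.mp hx).1

theorem achievesProlixity_zero_iff {Q : Finset (Finset (Fin n))} :
    AchievesProlixity Q 0 ↔ IsDyadicHitter Q := by
  refine ⟨fun hQ μ hμ hdy hnc => ?_, IsDyadicHitter.achievesProlixity_zero⟩
  obtain ⟨T, hT, hTQ, hc⟩ := hQ μ hμ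
  obtain ⟨q, hq, hsum⟩ := hT.exists_sum_eq_half hμ hdy hnc (by simpa using hc)
  exact ⟨q, hTQ hq, mem_splitters.mpr hsum⟩

theorem exists_mem_splitters {μ : Fin n → ℝ} (hμ : IsDistribution μ) (hdy : IsDyadic μ)
    (hnc : NonConstant μ) : ∃ A, A ∈ splitters n μ := by
  obtain ⟨e, he, hμe⟩ := hμ.exists_isKraft hdy
  obtain ⟨A, hA, hsum⟩ := he.exists_sum_eq_half hnc.two_le_card_supp
  exact ⟨A, mem_splitters.mpr (hsum ▸ sum_congr rfl fun x hx => hμe x (hA hx))⟩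

theorem isDyadicHitter_univ : IsDyadicHitter (univ : Finset (Finset (Fin n))) :=
  fun _ hμ hdy hnc =>
    let ⟨A, hA⟩ := exists_mem_splitters hμ hdy hnc
    ⟨A, mem_univ A, hA⟩

theorem card_mem_Ico_of_mem_splitters {μ : Fin n → ℝ} (hμ : IsDistribution μ)
    {A : Finset (Fin n)} (hA : A ∈ splitters n μ) : #A ∈ Ico 1 n := by
  rw [mem_splitters] at hA
  have hne : A.Nonempty := nonempty_of_sum_ne_zero (by rw [hA]; norm_num)
  have hA_univ : A ≠ univ := by
    rintro rfl
    rw [hμ.2] at hA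
    norm_num at hA
  have := (card_lt_iff_ne_univ A).mpr hA_univ
  rw [Fintype.card_fin] at this
  exact mem_Ico.mpr ⟨card_pos.mpr hne, this⟩

theorem uOpt_zero_le_card {Q : Finset (Finset (Fin n))} (hQ : IsDyadicHitter Q) :
    uOpt n 0 ≤ #Q :=
  Nat.sInf_le ⟨Q, rfl, achievesProlixity_zero_iff.mpr hQ⟩

theorem exists_isDyadicHitter_card_eq_uOpt_zero (n : ℕ) :
    ∃ Q : Finset (Finset (Fin n)), IsDyadicHitter Q ∧ #Q = uOpt n 0 := by
  obtain ⟨Q, hQ, hQa⟩ := Nat.sInf_mem (⟨_, univ, rfl,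
    achievesProlixity_zero_iff.mpr isDyadicHitter_univ⟩ :
      {k | ∃ Q : Finset (Finset (Fin n)), #Q = k ∧ AchievesProlixity Q 0}.Nonempty)
  exact ⟨Q, achievesProlixity_zero_iff.mp hQa, hQ⟩

end Hitter

section Density

variable {n : ℕ}

theorem relDensity_nonneg (D : Finset (Finset (Fin n))) (i : ℕ) : 0 ≤ relDensity n D i := by
  unfold relDensity
  positivity

theorem relDensity_le_one (D : Finset (Finset (Fin n))) {i : ℕ} (hi : i ≤ n) :
    relDensity n D i ≤ 1 := by
  unfold relDensity
  rw [div_le_one (by exact_mod_cast Nat.choose_pos hi)]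
  have : D.filter (#· = i) ⊆ powersetCard i univ := fun B hB =>
    mem_powersetCard.mpr ⟨subset_univ B, (mem_filter.mp hB).2⟩
  replace := card_le_card this
  rw [card_powersetCard, card_univ, Fintype.card_fin] at this
  exact_mod_cast this

theorem maxRelDensity_nonneg (D : Finset (Finset (Fin n))) : 0 ≤ maxRelDensity n D :=
  Real.iSup_nonneg fun _ => Real.iSup_nonneg fun _ => relDensity_nonneg D _

theorem relDensity_le_maxRelDensity (D : Finset (Finset (Fin n))) {i : ℕ} (hi : i ∈ Ico 1 n) :
    relDensity n D i ≤ maxRelDensity n D := by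
  have hbdd : BddAbove (Set.range fun j => ⨆ _ : j ∈ Ico 1 n, relDensity n D j) :=
    ⟨1, Set.forall_mem_range.mpr fun j => Real.iSup_le
      (fun hj => relDensity_le_one D (mem_Ico.mp hj).2.le) zero_le_one⟩
  exact (ciSup_pos hi).symm.trans_le (le_ciSup hbdd i)

theorem exists_maxRelDensity_le (hn : 2 ≤ n) (D : Finset (Finset (Fin n))) :
    ∃ i ∈ Ico 1 n, maxRelDensity n D ≤ relDensity n D i := by
  obtain ⟨i, hi, hmax⟩ := exists_max_image (Ico 1 n) (relDensity n D)
    ⟨1, mem_Ico.mpr ⟨le_rfl, by omega⟩⟩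
  exact ⟨i, hi, Real.iSup_le (fun j => Real.iSup_le (hmax j) (relDensity_nonneg D i))
    (relDensity_nonneg D i)⟩

theorem rhoMin_le {μ : Fin n → ℝ} (hμ : IsDistribution μ) (hdy : IsDyadic μ)
    (hnc : NonConstant μ) : rhoMin n ≤ maxRelDensity n (splitters n μ) :=
  csInf_le ⟨0, fun _ ⟨_, _, _, _, h⟩ => h ▸ maxRelDensity_nonneg _⟩ ⟨μ, hμ, hdy, hnc, rfl⟩

theorem exists_rhoMin_eq (hn : 2 ≤ n) :
    ∃ μ : Fin n → ℝ, IsDistribution μ ∧ IsDyadic μ ∧ NonConstant μ ∧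
      rhoMin n = maxRelDensity n (splitters n μ) := by
  set R : Set ℝ := {ρ | ∃ μ : Fin n → ℝ, IsDistribution μ ∧ IsDyadic μ ∧ NonConstant μ ∧
      ρ = maxRelDensity n (splitters n μ)}
  have hfin : R.Finite :=
    (Set.finite_range (maxRelDensity n)).subset fun _ ⟨μ, _, _, _, h⟩ => ⟨_, h.symm⟩
  have huniv : 2 ≤ #(univ : Finset (Fin n)) := by rwa [card_univ, Fintype.card_fin]
  obtain ⟨d, hk⟩ := exists_isKraft (card_pos.mp (by omega : 0 < #(univ : Finset (Fin n))))
  have hne : R.Nonempty := ⟨_, kraftDist univ d, hk.isDistribution_kraftDist,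
    isDyadic_kraftDist, nonConstant_kraftDist huniv, rfl⟩
  exact hne.csInf_mem hfin

theorem rhoMin_pos (hn : 2 ≤ n) : 0 < rhoMin n := by
  obtain ⟨μ, hμ, hdy, hnc, hρ⟩ := exists_rhoMin_eq hn
  obtain ⟨A, hA⟩ := exists_mem_splitters hμ hdy hnc
  have hA' := card_mem_Ico_of_mem_splitters hμ hA
  refine hρ ▸ lt_of_lt_of_le ?_ (relDensity_le_maxRelDensity _ hA')
  unfold relDensity
  have : 0 < #((splitters n μ).filter (#· = #A)) := card_pos.mpr ⟨A, mem_filter.mpr ⟨hA, rfl⟩⟩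
  have := Nat.choose_pos (n := n) (k := #A) (mem_Ico.mp hA').2.le
  positivity

theorem rhoMin_le_one (hn : 2 ≤ n) : rhoMin n ≤ 1 := by
  obtain ⟨μ, -, -, -, hρ⟩ := exists_rhoMin_eq hn
  obtain ⟨i, hi, hle⟩ := exists_maxRelDensity_le hn (splitters n μ)
  exact hρ ▸ hle.trans (relDensity_le_one _ (mem_Ico.mp hi).2.le)

end Density

section LowerBound

open Equiv

open scoped Nat

section Relabel

variable {α : Type} {μ : α → ℝ}

theorem IsDistribution.comp_perm [Fintype α] (hμ : IsDistribution μ) (σ : Perm α) :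
    IsDistribution (μ ∘ σ) :=
  ⟨fun x => hμ.1 (σ x), (Equiv.sum_comp σ μ).trans hμ.2⟩

theorem IsDyadic.comp {β : Type} (hdy : IsDyadic μ) (f : β → α) : IsDyadic (μ ∘ f) :=
  fun x => hdy (f x)

theorem NonConstant.comp_perm (hnc : NonConstant μ) (σ : Perm α) : NonConstant (μ ∘ σ) := by
  obtain ⟨x, y, hxy, hx, hy⟩ := hnc
  exact ⟨σ.symm x, σ.symm y, σ.symm.injective.ne hxy, by simpa using hx, by simpa using hy⟩

end Relabel

variable {n : ℕ}

theorem mem_splitters_comp_perm (μ : Fin n → ℝ) (σ : Perm (Fin n)) (A : Finset (Fin n)) :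
    A ∈ splitters n (μ ∘ σ) ↔ A.image σ ∈ splitters n μ := by
  rw [mem_splitters, mem_splitters, sum_image fun x _ y _ h => σ.injective h]
  rfl

/-- A permutation mapping `A` onto `B` is a pair of bijections `A → B` and `Aᶜ → Bᶜ`. -/
theorem card_perm_image_eq_le (A B : Finset (Fin n)) (hAB : #A = #B) :
    #{σ : Perm (Fin n) | A.image σ = B} ≤ (#A)! * (n - #A)! := by
  set P := ({σ : Perm (Fin n) | A.image σ = B} : Finset _)
  have maps {σ : Perm (Fin n)} (hσ : σ ∈ P) (x : Fin n) : σ x ∈ B ↔ x ∈ A := by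
    rw [← (mem_filter.mp hσ).2, σ.injective.mem_finset_image]
  let F : P → (A ↪ B) × ((Aᶜ : Finset (Fin n)) ↪ (Bᶜ : Finset (Fin n))) := fun σ =>
    (⟨fun a => ⟨σ.1 a, (maps σ.2 a).mpr a.2⟩, fun _ _ h => Subtype.ext (σ.1.injective
      (congrArg Subtype.val h))⟩,
     ⟨fun a => ⟨σ.1 a, mem_compl.mpr fun h => mem_compl.mp a.2 ((maps σ.2 a).mp h)⟩,
      fun _ _ h => Subtype.ext (σ.1.injective (congrArg Subtype.val h))⟩)
  have hF : Function.Injective F := by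
    rintro ⟨σ, hσ⟩ ⟨τ, hτ⟩ h
    refine Subtype.ext (Equiv.ext fun x => ?_)
    by_cases hx : x ∈ A
    · exact congrArg Subtype.val (DFunLike.congr_fun (congrArg Prod.fst h) ⟨x, hx⟩)
    · exact congrArg Subtype.val
        (DFunLike.congr_fun (congrArg Prod.snd h) ⟨x, mem_compl.mpr hx⟩)
  calc #P = Fintype.card P := (Fintype.card_coe P).symm
    _ ≤ _ := Fintype.card_le_of_injective F hF
    _ = (#A)! * (n - #A)! := by
      rw [Fintype.card_prod, Fintype.card_embedding_eq, Fintype.card_embedding_eq]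
      simp only [Fintype.card_coe, card_compl, Fintype.card_fin, hAB, Nat.descFactorial_self]

theorem card_perm_image_mem_le (D : Finset (Finset (Fin n))) (A : Finset (Fin n)) :
    (#{σ : Perm (Fin n) | A.image σ ∈ D} : ℝ) ≤ relDensity n D #A * n ! := by
  set Dᵢ := D.filter (#· = #A)
  have hsub : ({σ : Perm (Fin n) | A.image σ ∈ D} : Finset _) ⊆
      Dᵢ.biUnion fun B => {σ : Perm (Fin n) | A.image σ = B} := fun σ hσ =>
    mem_biUnion.mpr ⟨A.image σ, mem_filter.mpr ⟨(mem_filter.mp hσ).2,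
      card_image_of_injective A σ.injective⟩, mem_filter.mpr ⟨mem_univ σ, rfl⟩⟩
  have hcount : #{σ : Perm (Fin n) | A.image σ ∈ D} ≤ #Dᵢ * ((#A)! * (n - #A)!) :=
    calc _ ≤ _ := card_le_card hsub
      _ ≤ _ := card_biUnion_le
      _ ≤ ∑ _B ∈ Dᵢ, (#A)! * (n - #A)! := sum_le_sum fun B hB =>
          card_perm_image_eq_le A B (mem_filter.mp hB).2.symm
      _ = _ := by rw [sum_const, smul_eq_mul]
  have hA : #A ≤ n := (card_le_univ A).trans_eq (Fintype.card_fin n)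
  have hchoose : (n.choose #A : ℝ) * ((#A)! * (n - #A)!) = n ! := by
    exact_mod_cast (mul_assoc _ _ _).symm.trans (Nat.choose_mul_factorial_mul_factorial hA)
  have hpos : (n.choose #A : ℝ) ≠ 0 := by exact_mod_cast (Nat.choose_pos hA).ne'
  rw [relDensity, ← hchoose, ← mul_assoc, div_mul_cancel₀ _ hpos]
  exact_mod_cast hcount

theorem IsDyadicHitter.one_le_card_mul_rhoMin (hn : 2 ≤ n) {Q : Finset (Finset (Fin n))}
    (hQ : IsDyadicHitter Q) : 1 ≤ #Q * rhoMin n := by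
  obtain ⟨μ, hμ, hdy, hnc, hρ⟩ := exists_rhoMin_eq hn
  have hcover : (univ : Finset (Perm (Fin n))) ⊆
      Q.biUnion fun A => {σ : Perm (Fin n) | A.image σ ∈ splitters n μ} := fun σ _ =>
    let ⟨A, hA, hAσ⟩ := hQ _ (hμ.comp_perm σ) (hdy.comp σ) (hnc.comp_perm σ)
    mem_biUnion.mpr ⟨A, hA, mem_filter.mpr ⟨mem_univ σ, (mem_splitters_comp_perm μ σ A).mp hAσ⟩⟩
  have hfiber (A : Finset (Fin n)) :
      (#{σ : Perm (Fin n) | A.image σ ∈ splitters n μ} : ℝ) ≤ rhoMin n * n ! := by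
    by_cases hA : #A ∈ Ico 1 n
    · refine (card_perm_image_mem_le _ A).trans ?_
      rw [hρ]
      gcongr
      exact relDensity_le_maxRelDensity _ hA
    · rw [filter_false_of_mem fun (σ : Perm (Fin n)) _ hσ =>
        hA (card_image_of_injective A σ.injective ▸ card_mem_Ico_of_mem_splitters hμ hσ),
        card_empty, Nat.cast_zero]
      exact mul_nonneg (rhoMin_pos hn).le (Nat.cast_nonneg _)
  have hcard : (n ! : ℝ) ≤ #Q * rhoMin n * n ! :=
    calc (n ! : ℝ) = #(univ : Finset (Perm (Fin n))) := by
          rw [card_univ, Fintype.card_perm, Fintype.card_fin]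
      _ ≤ ∑ A ∈ Q, (#{σ : Perm (Fin n) | A.image σ ∈ splitters n μ} : ℝ) := by
          exact_mod_cast (card_le_card hcover).trans card_biUnion_le
      _ ≤ ∑ _A ∈ Q, rhoMin n * n ! := sum_le_sum fun A _ => hfiber A
      _ = #Q * rhoMin n * n ! := by rw [sum_const, nsmul_eq_mul, mul_assoc]
  exact le_of_mul_le_mul_right (by linarith) (by positivity : (0 : ℝ) < n !)

end LowerBound

section UpperBound

open Real

theorem exists_greedy_cover {ι β : Type*} [DecidableEq β] (hits : β → ι → Prop)
    [∀ b f, Decidable (hits b f)] {c : ℝ} (hc : c ≤ 1)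
    (k : ℕ) (F : Finset ι) (hstep : ∀ G ⊆ F, ∃ b, c * #G ≤ #{f ∈ G | hits b f}) :
    ∃ Q : Finset β, #Q ≤ k ∧
      ∀ R ⊆ F, (∀ f ∈ R, ∀ b ∈ Q, ¬hits b f) → (#R : ℝ) ≤ (1 - c) ^ k * #F := by
  induction k generalizing F with
  | zero =>
    refine ⟨∅, le_rfl, fun R hR _ => ?_⟩
    rw [pow_zero, one_mul]
    exact_mod_cast card_le_card hR
  | succ k ih =>
    obtain ⟨b, hb⟩ := hstep F subset_rfl
    set F' := F.filter fun f => ¬hits b f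
    obtain ⟨Q, hQ, hF'⟩ := ih F' fun G hG => hstep G (hG.trans (filter_subset _ F))
    refine ⟨insert b Q, (card_insert_le b Q).trans (by omega), fun R hR hmiss => ?_⟩
    have hRF' : R ⊆ F' := fun f hf =>
      mem_filter.mpr ⟨hR hf, hmiss f hf b (mem_insert_self b Q)⟩
    have hF'F : (#F' : ℝ) ≤ (1 - c) * #F := by
      have : (#{f ∈ F | hits b f} : ℝ) + #F' = #F := by
        exact_mod_cast card_filter_add_card_filter_not (s := F) (fun f => hits b f)
      linarith
    calc (#R : ℝ) ≤ (1 - c) ^ k * #F' :=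
          hF' R hRF' fun f hf b' hb' => hmiss f hf b' (mem_insert_of_mem hb')
      _ ≤ (1 - c) ^ k * ((1 - c) * #F) := by gcongr
      _ = (1 - c) ^ (k + 1) * #F := by ring

variable {n : ℕ}

/-- Double counting of the pairs `(μ, B)` with `B ∈ D μ` and `#B = i`. -/
theorem exists_card_filter_mem_ge {ι : Type*} (D : ι → Finset (Finset (Fin n))) (G : Finset ι)
    {i : ℕ} (hi : i ≤ n) {r : ℝ} (hr : ∀ μ ∈ G, r ≤ relDensity n (D μ) i) :
    ∃ B : Finset (Fin n), r * #G ≤ #{μ ∈ G | B ∈ D μ} := by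
  set P := powersetCard i (univ : Finset (Fin n))
  have hP : #P = n.choose i := by rw [card_powersetCard, card_univ, Fintype.card_fin]
  have hchoose : (0 : ℝ) < n.choose i := by exact_mod_cast Nat.choose_pos hi
  have hdouble := sum_card_bipartiteAbove_eq_sum_card_bipartiteBelow (fun μ B => B ∈ D μ)
    (s := G) (t := P)
  have habove (μ : ι) : P.bipartiteAbove (fun μ B => B ∈ D μ) μ = (D μ).filter (#· = i) := by
    ext B
    simp [bipartiteAbove, P, mem_powersetCard, and_comm]
  simp only [habove] at hdouble
  have hsum : ∑ _B ∈ P, r * #G ≤ ∑ B ∈ P, (#{μ ∈ G | B ∈ D μ} : ℝ) :=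
    calc ∑ _B ∈ P, r * #G = ∑ μ ∈ G, r * n.choose i := by
          rw [sum_const, sum_const, hP, nsmul_eq_mul, nsmul_eq_mul]; ring
      _ ≤ ∑ μ ∈ G, (#((D μ).filter (#· = i)) : ℝ) :=
          sum_le_sum fun μ hμ => (le_div_iff₀ hchoose).mp (hr μ hμ)
      _ = ∑ B ∈ P, (#{μ ∈ G | B ∈ D μ} : ℝ) := by exact_mod_cast hdouble
  obtain ⟨B, -, hB⟩ := exists_le_of_sum_le
    (powersetCard_nonempty.mpr (by rwa [card_univ, Fintype.card_fin])) hsum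
  exact ⟨B, hB⟩

theorem exists_card_filter_mem_splitters_ge (hn : 2 ≤ n) (G : Finset (Fin n → ℝ))
    (hG : ∀ μ ∈ G, IsDistribution μ ∧ IsDyadic μ ∧ NonConstant μ) :
    ∃ A : Finset (Fin n), rhoMin n / n * #G ≤ #{μ ∈ G | A ∈ splitters n μ} := by
  have hdense (μ) (hμ : μ ∈ G) : ∃ i ∈ Ico 1 n, rhoMin n ≤ relDensity n (splitters n μ) i :=
    let ⟨h₁, h₂, h₃⟩ := hG μ hμ
    let ⟨i, hi, hle⟩ := exists_maxRelDensity_le hn (splitters n μ)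
    ⟨i, hi, (rhoMin_le h₁ h₂ h₃).trans hle⟩
  choose! idx hidx hρidx using hdense
  have hn' : (0 : ℝ) < n := by positivity
  obtain ⟨i, hi, hfiber⟩ := exists_le_card_fiber_of_nsmul_le_card_of_maps_to hidx
    ⟨1, mem_Ico.mpr ⟨le_rfl, by omega⟩⟩ (b := (#G : ℝ) / n) (by
      rw [Nat.card_Ico, nsmul_eq_mul, mul_div_assoc', div_le_iff₀ hn', mul_comm (#G : ℝ)]
      exact mul_le_mul_of_nonneg_right (by exact_mod_cast Nat.sub_le n 1) (Nat.cast_nonneg _))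
  obtain ⟨A, hA⟩ := exists_card_filter_mem_ge (fun μ => splitters n μ) {μ ∈ G | idx μ = i}
    (mem_Ico.mp hi).2.le (r := rhoMin n) fun μ hμ =>
      (mem_filter.mp hμ).2 ▸ hρidx μ (mem_filter.mp hμ).1
  refine ⟨A, ?_⟩
  calc rhoMin n / n * #G = rhoMin n * (#G / n) := by ring
    _ ≤ rhoMin n * #{μ ∈ G | idx μ = i} := by gcongr; exact (rhoMin_pos hn).le
    _ ≤ #{μ ∈ {μ ∈ G | idx μ = i} | A ∈ splitters n μ} := hA
    _ ≤ #{μ ∈ G | A ∈ splitters n μ} := by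
      exact_mod_cast card_le_card (filter_subset_filter _ (filter_subset _ G))

/-- A non-constant dyadic distribution is `2^{-e}` with exponents `1 ≤ e ≤ n - 1`. -/
theorem exists_finset_card_le_mem_iff_dyadic (n : ℕ) :
    ∃ F : Finset (Fin n → ℝ), #F ≤ n ^ n ∧
      ∀ μ : Fin n → ℝ, μ ∈ F ↔ IsDistribution μ ∧ IsDyadic μ ∧ NonConstant μ := by
  classical
  set E := univ.image fun (g : Fin n → Fin n) x =>
    if (g x : ℕ) = 0 then 0 else (1 / 2 : ℝ) ^ (g x : ℕ)
  refine ⟨E.filter fun μ => IsDistribution μ ∧ IsDyadic μ ∧ NonConstant μ,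
    (card_filter_le _ _).trans (card_image_le.trans (by rw [card_univ, Fintype.card_fun,
      Fintype.card_fin])), fun μ => ⟨fun h => (mem_filter.mp h).2, fun ⟨hμ, hdy, hnc⟩ => ?_⟩⟩
  refine mem_filter.mpr ⟨?_, hμ, hdy, hnc⟩
  obtain ⟨e, he, hμe⟩ := hμ.exists_isKraft hdy
  have hS := hnc.two_le_card_supp
  have hcard : #(supp μ) ≤ n := (card_le_univ _).trans_eq (Fintype.card_fin n)
  have hlt (x) (hx : x ∈ supp μ) : e x < n := (he.le_card_sub_one hx).trans_lt (by omega)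
  refine mem_image.mpr ⟨fun x => if hx : x ∈ supp μ then ⟨e x, hlt x hx⟩ else ⟨0, by omega⟩,
    mem_univ _, funext fun x => ?_⟩
  by_cases hx : x ∈ supp μ
  · have := he.one_le hS hx
    simp [hx, hμe x hx, show e x ≠ 0 by omega]
  · simpa [hx] using (not_ne_iff.mp (mt mem_supp.mpr hx)).symm

theorem one_sub_pow_floor_mul_lt_one (hn : 2 ≤ n) {ρ : ℝ} (hρ : 0 < ρ) (hρ₁ : ρ ≤ 1) :
    (1 - ρ / n) ^ ⌊(n : ℝ) ^ 2 * Nat.clog 2 n / ρ⌋₊ * (n : ℝ) ^ n < 1 := by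
  set L := Nat.clog 2 n
  set K := ⌊(n : ℝ) ^ 2 * L / ρ⌋₊
  have hn₂ : (2 : ℝ) ≤ n := by exact_mod_cast hn
  have hL : (1 : ℝ) ≤ L := by exact_mod_cast Nat.clog_pos one_lt_two (by omega)
  have hlog : log n ≤ L * log 2 := by
    rw [← log_pow]
    exact log_le_log (by positivity) (by exact_mod_cast Nat.le_pow_clog one_lt_two n)
  have hK : (n : ℝ) ^ 2 * L < (K + 1) * ρ := by
    rw [← div_lt_iff₀ hρ]
    exact Nat.lt_floor_add_one _
  -- `n log n ≤ n L log 2 < n L - 1/2 < K ρ / n`, as `log 2 < 0.7` and `n L ≥ 2`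
  have hkey : n * log n < K * (ρ / n) := by
    have h₁ : n * L < K * (ρ / n) + ρ / n := by
      rw [← add_one_mul, mul_div_assoc', lt_div_iff₀ (by positivity)]
      nlinarith
    have h₂ : ρ / n ≤ 1 / 2 := by rw [div_le_iff₀ (by positivity)]; linarith
    have h₃ : 2 ≤ (n : ℝ) * L := by nlinarith
    have h₄ : n * log n ≤ n * L * log 2 := by
      rw [mul_assoc]; exact mul_le_mul_of_nonneg_left hlog (by positivity)
    have h₅ : n * L * log 2 ≤ n * L * 0.6931471808 :=
      mul_le_mul_of_nonneg_left log_two_lt_d9.le (by positivity)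
    linarith
  calc (1 - ρ / n) ^ K * (n : ℝ) ^ n ≤ exp (-(ρ / n)) ^ K * exp (n * log n) := by
        rw [← log_pow, exp_log (by positivity)]
        gcongr
        · rw [sub_nonneg, div_le_one (by positivity)]; linarith
        · exact one_sub_le_exp_neg _
    _ < 1 := by
        rw [← exp_nat_mul, ← exp_add, exp_lt_one_iff]
        linarith

theorem exists_isDyadicHitter_card_le (hn : 2 ≤ n) :
    ∃ Q : Finset (Finset (Fin n)), IsDyadicHitter Q ∧
      #Q ≤ ⌊(n : ℝ) ^ 2 * Nat.clog 2 n / rhoMin n⌋₊ := by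
  obtain ⟨F, hF, hmem⟩ := exists_finset_card_le_mem_iff_dyadic n
  have hρ := rhoMin_pos hn
  have hc : rhoMin n / n ≤ 1 := div_le_one_of_le₀ ((rhoMin_le_one hn).trans
    (by exact_mod_cast (by omega : 1 ≤ n))) (Nat.cast_nonneg n)
  have hc₀ : 0 ≤ 1 - rhoMin n / n := sub_nonneg.mpr hc
  obtain ⟨Q, hQ, hres⟩ := exists_greedy_cover (fun A μ => A ∈ splitters n μ) hc _ F fun G hG =>
    exists_card_filter_mem_splitters_ge hn G fun μ hμ => (hmem μ).mp (hG hμ)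
  refine ⟨Q, fun μ hμ hdy hnc => ?_, hQ⟩
  by_contra! hmiss
  have hμF := (hmem μ).mpr ⟨hμ, hdy, hnc⟩
  have h₁ := hres {μ} (singleton_subset_iff.mpr hμF) fun f hf => (mem_singleton.mp hf) ▸ hmiss
  have h₂ : (#F : ℝ) ≤ (n : ℝ) ^ n := by exact_mod_cast hF
  have h₃ := one_sub_pow_floor_mul_lt_one hn hρ (rhoMin_le_one hn)
  rw [card_singleton, Nat.cast_one] at h₁
  nlinarith [pow_nonneg hc₀ ⌊(n : ℝ) ^ 2 * Nat.clog 2 n / rhoMin n⌋₊]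

end UpperBound

end TQ

open TQ in
/-- With `M = 1/ρ_min(n)`: `M ≤ u_Opt(n,0) ≤ n²·⌈log₂ n⌉·M`. -/
theorem uOpt_zero_vs_density (n : ℕ) (hn : 2 ≤ n) :
    1 / rhoMin n ≤ (uOpt n 0 : ℝ) ∧
    (uOpt n 0 : ℝ) ≤ (n : ℝ) ^ 2 * (Nat.clog 2 n : ℝ) * (1 / rhoMin n) := by
  have hρ := rhoMin_pos hn
  obtain ⟨Q, hQ, hQcard⟩ := exists_isDyadicHitter_card_eq_uOpt_zero n
  obtain ⟨Q', hQ', hQ'card⟩ := exists_isDyadicHitter_card_le hn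
  constructor
  · rw [← hQcard, div_le_iff₀ hρ]
    exact hQ.one_le_card_mul_rhoMin hn
  · calc (uOpt n 0 : ℝ) ≤ Q'.card := by exact_mod_cast uOpt_zero_le_card hQ'
      _ ≤ ⌊(n : ℝ) ^ 2 * Nat.clog 2 n / rhoMin n⌋₊ := by exact_mod_cast hQ'card
      _ ≤ (n : ℝ) ^ 2 * Nat.clog 2 n / rhoMin n := Nat.floor_le (by positivity)
      _ = (n : ℝ) ^ 2 * Nat.clog 2 n * (1 / rhoMin n) := by ring
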